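/- arXiv:2510.25403 — 2 statements merged into one kernel-verified Lean document; each statement's English description precedes it below -/
import Mathlib

section
/- Let G be a finite non-cyclic group and a ≠ e an element whose order is not a prime power. Then the set of closed twins of a in the power graph of G equals gen(⟨a⟩)∖{a}, and hence N_a = φ(ord(a)). -/
/-!
Generators of `⟨a⟩` have the same neighbourhood as `a`. Conversely, a closed twin `b` of `a` is
comparable with `a`; if `⟨v⟩ < ⟨u⟩` with `{u, v} = {a, b}`, then `ord u` is not a prime power and
every cyclic subgroup of `⟨u⟩` other than `⟨u⟩` and `⟨v⟩` is comparable with `⟨v⟩`. Applied to the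
Sylow subgroups of `⟨u⟩` for two distinct primes, this forces `v = 1`. Then `u` is adjacent to every
vertex, and the same divisibility argument shows that such an element of non-prime-power order
generates `G`, which is not cyclic.
-/

def padj {G : Type*} [Group G] (a b : G) : Prop :=
  a ≠ b ∧ (Subgroup.zpowers a ≤ Subgroup.zpowers b ∨ Subgroup.zpowers b ≤ Subgroup.zpowers a)

def pnbhd {G : Type*} [Group G] (a : G) : Set G := {x | padj a x}

def closedTwins {G : Type*} [Group G] (a : G) : Set G :=
  {b | padj a b ∧ pnbhd a \ {b} = pnbhd b \ {a}}

noncomputable def Ncount {G : Type*} [Group G] (a : G) : ℕ := (closedTwins a).ncard + 1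

def eadj {G : Type*} [Group G] (a b : G) : Prop :=
  a ≠ b ∧ ∃ c : G, a ∈ Subgroup.zpowers c ∧ b ∈ Subgroup.zpowers c

open Subgroup

namespace Nat

theorem exists_prime_ordProj_not_dvd {m n : ℕ} (hn : n ≠ 0) (hmn : m ∣ n) (hne : m ≠ n) :
    ∃ p, p.Prime ∧ p ∣ n ∧ ¬ p ^ n.factorization p ∣ m := by
  have hm : m ≠ 0 := ne_zero_of_dvd_ne_zero hn hmn
  by_contra! h
  refine hne (dvd_antisymm hmn ((factorization_prime_le_iff_dvd hn hm).mp fun p hp => ?_))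
  by_cases hpn : p ∣ n
  · exact (hp.pow_dvd_iff_le_factorization hm).mp (h p hp hpn)
  · simp [factorization_eq_zero_of_not_dvd hpn]

theorem eq_one_of_forall_dvd_or_dvd {m n : ℕ} (hn : ¬ IsPrimePow n) (hn0 : n ≠ 0)
    (hmn : m ∣ n) (hne : m ≠ n) (h : ∀ d, d ∣ n → d ≠ n → d ∣ m ∨ m ∣ d) : m = 1 := by
  obtain ⟨p, hp, hpn, hpm⟩ := exists_prime_ordProj_not_dvd hn0 hmn hne
  have proper : ∀ q, q.Prime → q ∣ n → q ^ n.factorization q ≠ n := fun q hq hqn heq =>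
    hn ⟨q, _, hq.prime, hq.factorization_pos_of_dvd hn0 hqn, heq⟩
  have hmp : m ∣ p ^ n.factorization p :=
    (h _ (ordProj_dvd n p) (proper p hp hpn)).resolve_left hpm
  obtain ⟨q, ⟨hq, hqn⟩, hqp⟩ : ∃ q, (q.Prime ∧ q ∣ n) ∧ q ≠ p := by
    by_contra! hu
    exact hn (isPrimePow_iff_unique_prime_dvd.mpr ⟨p, ⟨hp, hpn⟩, fun q hq => hu q hq⟩)
  have hcop : Coprime (p ^ n.factorization p) (q ^ n.factorization q) :=
    coprime_pow_primes _ _ hp hq hqp.symm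
  rcases h _ (ordProj_dvd n q) (proper q hq hqn) with hqm | hmq
  · have hq1 : q ^ n.factorization q ≠ 1 :=
      (one_lt_pow (hq.factorization_pos_of_dvd hn0 hqn).ne' hq.one_lt).ne'
    exact absurd (eq_one_of_dvd_coprimes hcop (hqm.trans hmp) dvd_rfl) hq1
  · exact eq_one_of_dvd_coprimes hcop hmp hmq

end Nat

section PowerGraph

variable {G : Type*} [Group G]

theorem orderOf_dvd_or_dvd_of_padj {x y : G} (h : padj x y) :
    orderOf x ∣ orderOf y ∨ orderOf y ∣ orderOf x :=
  h.2.imp (fun h => orderOf_dvd_of_mem_zpowers (zpowers_le.mp h))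
    (fun h => orderOf_dvd_of_mem_zpowers (zpowers_le.mp h))

theorem orderOf_ne_of_zpowers_lt [Finite G] {x y : G} (h : zpowers x < zpowers y) :
    orderOf x ≠ orderOf y := by
  intro heq
  refine h.ne (eq_of_le_of_card_ge h.le ?_)
  rw [Nat.card_zpowers, Nat.card_zpowers, heq]

theorem zpowers_eq_zpowers_iff_mem_and_orderOf_eq [Finite G] {a b : G} :
    zpowers b = zpowers a ↔ b ∈ zpowers a ∧ orderOf b = orderOf a := by
  refine ⟨fun h => ⟨h ▸ mem_zpowers b, by rw [← Nat.card_zpowers, h, Nat.card_zpowers]⟩,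
    fun ⟨hb, hord⟩ => eq_of_le_of_card_ge (zpowers_le.mpr hb) ?_⟩
  rw [Nat.card_zpowers, Nat.card_zpowers, hord]

theorem ncard_setOf_zpowers_eq [Finite G] (a : G) :
    {b : G | zpowers b = zpowers a}.ncard = (orderOf a).totient := by
  have : Fintype (zpowers a) := Fintype.ofFinite _
  have hcard : Fintype.card (zpowers a) = orderOf a := by
    rw [← Nat.card_eq_fintype_card, Nat.card_zpowers]
  have himg : {b : G | zpowers b = zpowers a} =
      Subtype.val '' {x : zpowers a | orderOf x = orderOf a} := by
    ext b
    simp only [Set.mem_ofPred_eq, Set.mem_image, Subtype.exists, Subgroup.orderOf_mk,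
      exists_and_left, exists_prop, exists_eq_left,
      zpowers_eq_zpowers_iff_mem_and_orderOf_eq, and_comm]
  rw [himg, Set.ncard_image_of_injective _ Subtype.val_injective, Set.ncard_eq_toFinset_card',
    ← IsCyclic.card_orderOf_eq_totient hcard.symm.dvd]
  congr 1
  ext
  simp

theorem pnbhd_diff_eq_of_zpowers_eq {a b : G} (h : zpowers a = zpowers b) :
    pnbhd a \ {b} = pnbhd b \ {a} := by
  ext x
  simp only [pnbhd, padj, Set.mem_sdiff, Set.mem_ofPred_eq, Set.mem_singleton_iff, h]
  grind

theorem forall_padj_of_pnbhd_diff_one_eq {u : G} (hu : u ≠ 1)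
    (htw : pnbhd u \ {1} = pnbhd 1 \ {u}) : ∀ x, x ≠ u → padj u x := by
  intro x hxu
  rcases eq_or_ne x 1 with rfl | hx1
  · exact ⟨hu, .inr (by simp)⟩
  have : x ∈ pnbhd 1 \ {u} := ⟨⟨hx1.symm, .inl (by simp)⟩, hxu⟩
  exact (htw.symm ▸ this).1

theorem mem_closedTwins_of_zpowers_eq {a b : G} (hba : b ≠ a) (h : zpowers b = zpowers a) :
    b ∈ closedTwins a :=
  ⟨⟨hba.symm, .inl h.ge⟩, pnbhd_diff_eq_of_zpowers_eq h.symm⟩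

variable [Finite G]

theorem dvd_or_dvd_of_forall_padj {u v : G}
    (h : ∀ w ∈ zpowers u, w ≠ u → w ≠ v → padj v w) :
    ∀ d, d ∣ orderOf u → d ≠ orderOf u → d ∣ orderOf v ∨ orderOf v ∣ d := by
  intro d hd hdu
  set w := u ^ (orderOf u / d)
  have hw : orderOf w = d := orderOf_pow_orderOf_div (orderOf_pos u).ne' hd
  rcases eq_or_ne w v with rfl | hwv
  · exact .inl (hw ▸ dvd_rfl)
  have hwu : w ≠ u := fun heq => hdu (hw ▸ heq ▸ rfl)
  simpa only [hw, or_comm] using orderOf_dvd_or_dvd_of_padj (h w (npow_mem_zpowers u _) hwu hwv)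

theorem eq_one_of_zpowers_lt_of_pnbhd_diff_eq {u v : G} (hu : ¬ IsPrimePow (orderOf u))
    (hlt : zpowers v < zpowers u) (htw : pnbhd u \ {v} = pnbhd v \ {u}) : v = 1 := by
  refine orderOf_eq_one_iff.mp (Nat.eq_one_of_forall_dvd_or_dvd hu (orderOf_pos u).ne'
    (orderOf_dvd_of_mem_zpowers (zpowers_le.mp hlt.le)) (orderOf_ne_of_zpowers_lt hlt)
    (dvd_or_dvd_of_forall_padj fun w hw hwu hwv => ?_))
  have : w ∈ pnbhd u \ {v} := ⟨⟨hwu.symm, .inr (zpowers_le.mpr hw)⟩, hwv⟩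
  exact (htw ▸ this).1

theorem isCyclic_of_forall_padj {z : G} (hz : z ≠ 1) (hnp : ¬ IsPrimePow (orderOf z))
    (hstar : ∀ x, x ≠ z → padj z x) : IsCyclic G := by
  refine ⟨z, fun x => ?_⟩
  by_contra hxz
  have hlt : zpowers z < zpowers x := by
    refine lt_of_le_of_ne ?_ fun heq => hxz (heq.symm ▸ mem_zpowers x : x ∈ zpowers z)
    rcases (hstar x fun h => hxz (h ▸ mem_zpowers z)).2 with h | h
    · exact h
    · exact absurd (zpowers_le.mp h) hxz
  have hzx : orderOf z ∣ orderOf x := orderOf_dvd_of_mem_zpowers (zpowers_le.mp hlt.le)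
  have hz1 : orderOf z ≠ 1 := fun h => hz (orderOf_eq_one_iff.mp h)
  exact hz1 (Nat.eq_one_of_forall_dvd_or_dvd (fun hx => hnp (hx.dvd hzx hz1))
    (orderOf_pos x).ne' hzx (orderOf_ne_of_zpowers_lt hlt)
    (dvd_or_dvd_of_forall_padj fun w _ _ hwz => hstar w hwz))

theorem zpowers_eq_of_mem_closedTwins (hnc : ¬ IsCyclic G) {a b : G} (ha : a ≠ 1)
    (hord : ¬ IsPrimePow (orderOf a)) (hb : b ∈ closedTwins a) : zpowers b = zpowers a := by
  obtain ⟨⟨-, hcomp⟩, htw⟩ := hb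
  rcases hcomp with hab | hba
  · obtain hlt | heq := hab.lt_or_eq
    · have hb : ¬ IsPrimePow (orderOf b) := fun hb => hord
        (hb.dvd (orderOf_dvd_of_mem_zpowers (zpowers_le.mp hab)) (mt orderOf_eq_one_iff.mp ha))
      exact absurd (eq_one_of_zpowers_lt_of_pnbhd_diff_eq hb hlt htw.symm) ha
    · exact heq.symm
  · obtain hlt | heq := hba.lt_or_eq
    · obtain rfl := eq_one_of_zpowers_lt_of_pnbhd_diff_eq hord hlt htw
      exact absurd (isCyclic_of_forall_padj ha hord (forall_padj_of_pnbhd_diff_one_eq ha htw)) hnc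
    · exact heq

end PowerGraph

theorem stmt5 {G : Type*} [Group G] [Finite G] (hnc : ¬ IsCyclic G)
    (a : G) (ha : a ≠ 1) (hord : ¬ IsPrimePow (orderOf a)) :
    closedTwins a = {b : G | Subgroup.zpowers b = Subgroup.zpowers a} \ {a} ∧
      Ncount a = Nat.totient (orderOf a) := by
  have htwins : closedTwins a = {b : G | zpowers b = zpowers a} \ {a} := by
    ext b
    exact ⟨fun hb => ⟨zpowers_eq_of_mem_closedTwins hnc ha hord hb, hb.1.1.symm⟩,
      fun ⟨h, hba⟩ => mem_closedTwins_of_zpowers_eq hba h⟩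
  refine ⟨htwins, ?_⟩
  rw [Ncount, htwins, Set.ncard_sdiff_singleton_of_mem (s := {b : G | zpowers b = zpowers a}) rfl,
    ncard_setOf_zpowers_eq]
  have := Nat.totient_pos.mpr (orderOf_pos a)
  omega
end

section
/- Let G be a finite non-cyclic group and a, b ∈ G distinct elements that are non-adjacent in the power graph P(G), with N_a ≠ N_b. Then a and b are adjacent in the enhanced power graph P_e(G) if and only if there exists c ∈ G adjacent in P(G) to both a and b with N_c ≥ max{N_a, N_b}. -/
/-!
`Ncount x` is the size of the closed-twin class `K(x) = {t | N[t] = N[x]}` of `x` in `P(G)`.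
All generators of `⟨x⟩` lie in `K(x)`, so `φ (orderOf x) ≤ Ncount x`. Conversely, if `K(x)` lies
strictly inside a cyclic subgroup `⟨g⟩` of order `m`, then `Ncount x ≤ φ m`: the twins of `x`
form a chain in `⟨g⟩` whose orders all have the same comparable divisors of `m`. If there are two
distinct orders, this forces `m = d₁ * p ^ s` for the least order `d₁` and a prime `p`, every order
is `d₁ * p ^ j` with `j < s`, and `∑_{j<s} φ (d₁ p^j) ≤ φ (d₁ p^s)`.

If `a, b ∈ ⟨d⟩`, a maximal cyclic subgroup `⟨c⟩ ⊇ ⟨d⟩` contains the twin classes of `a` and of `b`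
strictly, so `c` is the required common neighbour. Conversely, a common neighbour `c` of the
non-adjacent `a, b` must lie either above both (then `a, b ∈ ⟨c⟩`) or below both; in the latter
case, unless `a, b` are enhanced-adjacent, the twin class of `c` lies strictly inside `⟨a⟩` and
`⟨b⟩`, so `Ncount c ≤ min (Ncount a) (Ncount b)`, contradicting `Ncount a ≠ Ncount b`.
-/

open Subgroup

namespace Nat

lemma sum_totient_mul_prime_pow_le {p n : ℕ} (hp : p.Prime) (hn : 0 < n) (s : ℕ) :
    ∑ j ∈ Finset.range s, φ (n * p ^ j) ≤ φ (n * p ^ s) := by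
  induction s with
  | zero => simp
  | succ s ih =>
    rw [Finset.sum_range_succ]
    rcases Nat.eq_zero_or_pos s with rfl | hs
    · simpa using Nat.le_of_dvd (totient_pos.2 (Nat.mul_pos hn hp.pos))
        (totient_dvd_of_dvd (dvd_mul_right n p))
    · have hstep : φ (n * p ^ (s + 1)) = p * φ (n * p ^ s) := by
        rw [pow_succ, ← mul_assoc, mul_comm _ p,
          totient_mul_of_prime_of_dvd hp (dvd_mul_of_dvd_right (dvd_pow_self p hs.ne') n)]
      rw [hstep]
      nlinarith [hp.two_le]

lemma exists_prime_pow_eq_of_forall_dvd_or_dvd {u v : ℕ} (hu : u ≠ 0) (hv : 1 < v)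
    (hvu : v ∣ u) (hne : v ≠ u) (h : ∀ w, w ∣ u → v ∣ w ∨ w ∣ v) :
    ∃ p s, p.Prime ∧ u = p ^ s := by
  set p := v.minFac
  have hp : p.Prime := minFac_prime hv.ne'
  have hcop : Coprime (ordProj[p] u) (ordCompl[p] u) := (coprime_ordCompl hp hu).pow_left _
  have hcompl : ordCompl[p] u ∣ v := (h _ (ordCompl_dvd u p)).resolve_left fun hvc =>
    not_dvd_ordCompl hp hu ((minFac_dvd v).trans hvc)
  refine ⟨p, u.factorization p, hp, ?_⟩
  rcases h _ (ordProj_dvd u p) with hproj | hproj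
  · have hone : ordCompl[p] u = 1 := eq_one_of_dvd_coprimes hcop (hcompl.trans hproj) dvd_rfl
    conv_lhs => rw [← ordProj_mul_ordCompl_eq_self u p, hone, mul_one]
  · have huv : u ∣ v := by
      simpa [ordProj_mul_ordCompl_eq_self] using hcop.mul_dvd_of_dvd_of_dvd hproj hcompl
    exact absurd (Nat.dvd_antisymm hvu huv) hne

lemma sum_totient_le_totient_of_forall_dvd_or_dvd {m : ℕ} (hm : m ≠ 0) (D : Finset ℕ)
    (hD : ∀ d ∈ D, d ∣ m ∧ d ≠ m)
    (hcomp : ∀ d ∈ D, ∀ d' ∈ D, ∀ e, e ∣ m → d ∣ e ∨ e ∣ d → d' ∣ e ∨ e ∣ d') :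
    ∑ d ∈ D, φ d ≤ φ m := by
  rcases D.eq_empty_or_nonempty with rfl | hD₀
  · simp
  set d₁ := D.min' hD₀
  have hd₁ : d₁ ∈ D := D.min'_mem hD₀
  have hd₁pos : 0 < d₁ := Nat.pos_of_dvd_of_pos (hD d₁ hd₁).1 (Nat.pos_of_ne_zero hm)
  have hd₁dvd : ∀ d ∈ D, d₁ ∣ d := fun d hd =>
    (hcomp d₁ hd₁ d hd d₁ (hD d₁ hd₁).1 (Or.inl dvd_rfl)).elim
      (fun h => (Nat.le_antisymm (D.min'_le d hd) (Nat.le_of_dvd hd₁pos h)) ▸ dvd_rfl) id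
  by_cases hsingle : ∀ d ∈ D, d = d₁
  · rw [Finset.eq_singleton_iff_unique_mem.2 ⟨hd₁, hsingle⟩, Finset.sum_singleton]
    exact Nat.le_of_dvd (totient_pos.2 (Nat.pos_of_ne_zero hm)) (totient_dvd_of_dvd (hD d₁ hd₁).1)
  push Not at hsingle
  obtain ⟨dk, hdk, hdkne⟩ := hsingle
  obtain ⟨u, hu⟩ := (hD d₁ hd₁).1
  obtain ⟨v, hv⟩ := hd₁dvd dk hdk
  have hv1 : 1 < v := by
    rcases v with _ | _ | v
    · exact absurd (zero_dvd_iff.1 (by simpa [hv] using (hD dk hdk).1)) hm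
    · exact absurd (by simpa using hv) hdkne
    · omega
  obtain ⟨p, s, hp, rfl⟩ : ∃ p s, p.Prime ∧ u = p ^ s := by
    refine exists_prime_pow_eq_of_forall_dvd_or_dvd (right_ne_zero_of_mul (hu ▸ hm)) hv1
      ((Nat.mul_dvd_mul_iff_left hd₁pos).1 (hv ▸ hu ▸ (hD dk hdk).1))
      (fun h => (hD dk hdk).2 (by rw [hv, hu, h])) fun w hw => ?_
    have hw' := hcomp d₁ hd₁ dk hdk (d₁ * w) (hu ▸ mul_dvd_mul_left d₁ hw)
      (Or.inl (dvd_mul_right d₁ w))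
    rw [hv] at hw'
    exact hw'.imp (Nat.mul_dvd_mul_iff_left hd₁pos).1 (Nat.mul_dvd_mul_iff_left hd₁pos).1
  have hDsub : D ⊆ (Finset.range s).image (d₁ * p ^ ·) := by
    intro d hd
    obtain ⟨w, rfl⟩ := hd₁dvd d hd
    obtain ⟨j, hj, rfl⟩ := (Nat.dvd_prime_pow hp).1
      ((Nat.mul_dvd_mul_iff_left hd₁pos).1 (hu ▸ (hD _ hd).1))
    refine Finset.mem_image.2 ⟨j, Finset.mem_range.2 (lt_of_le_of_ne hj fun h => ?_), rfl⟩
    exact (hD _ hd).2 (by rw [hu, h])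
  calc ∑ d ∈ D, φ d ≤ ∑ d ∈ (Finset.range s).image (d₁ * p ^ ·), φ d :=
        Finset.sum_le_sum_of_subset hDsub
    _ ≤ ∑ j ∈ Finset.range s, φ (d₁ * p ^ j) :=
        Finset.sum_image_le_of_nonneg fun _ _ => Nat.zero_le _
    _ ≤ φ (d₁ * p ^ s) := sum_totient_mul_prime_pow_le hp hd₁pos s
    _ = φ m := by rw [hu]

end Nat

section PowerGraph

variable {G : Type*} [Group G]

def closedPowerNbhd (a : G) : Set G := {x | zpowers a ≤ zpowers x ∨ zpowers x ≤ zpowers a}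

def twinClass (a : G) : Set G := {t | closedPowerNbhd t = closedPowerNbhd a}

lemma mem_closedPowerNbhd_self (a : G) : a ∈ closedPowerNbhd a := Or.inl le_rfl

lemma mem_twinClass_self (a : G) : a ∈ twinClass a := rfl

lemma mem_closedPowerNbhd_comm {a b : G} : b ∈ closedPowerNbhd a ↔ a ∈ closedPowerNbhd b :=
  Or.comm

lemma closedPowerNbhd_congr {a b : G} (h : zpowers a = zpowers b) :
    closedPowerNbhd a = closedPowerNbhd b := by
  simp only [closedPowerNbhd, h]

lemma padj_iff_mem_closedPowerNbhd {a b : G} : padj a b ↔ a ≠ b ∧ b ∈ closedPowerNbhd a :=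
  Iff.rfl

lemma pnbhd_eq (a : G) : pnbhd a = closedPowerNbhd a \ {a} := by
  ext x
  simp [pnbhd, padj_iff_mem_closedPowerNbhd, ne_comm, and_comm]

lemma closedTwins_eq (a : G) : closedTwins a = twinClass a \ {a} := by
  ext b
  simp only [closedTwins, twinClass, pnbhd_eq, padj_iff_mem_closedPowerNbhd, Set.mem_ofPred_eq,
    Set.mem_sdiff, Set.mem_singleton_iff]
  constructor
  · rintro ⟨⟨hab, hb⟩, hset⟩
    refine ⟨Set.ext fun y => ?_, Ne.symm hab⟩
    have hy := Set.ext_iff.1 hset y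
    by_cases hya : y = a
    · subst hya
      simpa [mem_closedPowerNbhd_self, mem_closedPowerNbhd_comm] using hb
    by_cases hyb : y = b
    · subst hyb
      simpa [mem_closedPowerNbhd_self] using hb
    simpa [hya, hyb] using hy.symm
  · rintro ⟨hK, hba⟩
    refine ⟨⟨Ne.symm hba, hK ▸ mem_closedPowerNbhd_self b⟩, ?_⟩
    rw [hK, Set.sdiff_sdiff, Set.sdiff_sdiff, Set.union_comm]

lemma padj_comm {a b : G} : padj a b ↔ padj b a := and_congr ne_comm Or.comm

lemma eadj_comm {a b : G} : eadj a b ↔ eadj b a :=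
  and_congr ne_comm ⟨fun ⟨c, ha, hb⟩ => ⟨c, hb, ha⟩, fun ⟨c, hb, ha⟩ => ⟨c, ha, hb⟩⟩

lemma forall_twinClass_lt_of_maximal {c x : G}
    (hmax : ∀ t, zpowers c ≤ zpowers t → zpowers t ≤ zpowers c)
    (hxc : zpowers x ≤ zpowers c) (hne : closedPowerNbhd x ≠ closedPowerNbhd c) :
    ∀ t ∈ twinClass x, zpowers t < zpowers c := by
  intro t (ht : closedPowerNbhd t = closedPowerNbhd x)
  have hct : c ∈ closedPowerNbhd t := ht ▸ Or.inl hxc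
  exact (hct.elim id (hmax t)).lt_of_ne fun heq => hne (ht ▸ closedPowerNbhd_congr heq)

lemma forall_twinClass_lt_of_not_eadj {a b c : G} (hab : a ≠ b) (hnadj : ¬ padj a b)
    (hne : ¬ eadj a b) (hca : zpowers c ≤ zpowers a) (hcb : zpowers c ≤ zpowers b) :
    ∀ t ∈ twinClass c, zpowers t < zpowers a := by
  intro t (ht : closedPowerNbhd t = closedPowerNbhd c)
  have hat : a ∈ closedPowerNbhd t := ht ▸ Or.inl hca
  have hbt : b ∈ closedPowerNbhd t := ht ▸ Or.inl hcb
  have hta : zpowers t ≤ zpowers a := by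
    refine hat.resolve_right fun hat' => ?_
    rcases hbt with htb | hbt'
    · exact hnadj ⟨hab, Or.inl (hat'.trans htb)⟩
    · exact hne ⟨hab, t, hat' (mem_zpowers a), hbt' (mem_zpowers b)⟩
  exact hta.lt_of_ne fun heq =>
    hnadj ⟨hab, (closedPowerNbhd_congr heq ▸ hbt : b ∈ closedPowerNbhd a)⟩

lemma Ncount_eq_ncard_twinClass [Finite G] (a : G) : Ncount a = (twinClass a).ncard := by
  rw [Ncount, closedTwins_eq,
    Set.ncard_sdiff_singleton_add_one (mem_twinClass_self a) (Set.toFinite _)]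

end PowerGraph

section Cyclic

variable {G : Type*} [Group G] [Finite G]

lemma IsCyclic.mem_zpowers_of_orderOf_dvd [IsCyclic G] {t y : G} (h : orderOf y ∣ orderOf t) :
    y ∈ zpowers t := by
  classical
  have := Fintype.ofFinite G
  have hroots : (zpowers t : Set G).toFinset = Finset.univ.filter (· ^ orderOf t = 1) := by
    refine Finset.eq_of_subset_of_card_le (fun z hz => ?_) ?_
    · simpa using orderOf_dvd_iff_pow_eq_one.1 (orderOf_dvd_of_mem_zpowers (Set.mem_toFinset.1 hz))
    · rw [← Set.ncard_eq_toFinset_card', ← Nat.card_coe_set_eq, SetLike.coe_sort_coe,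
        Nat.card_zpowers]
      exact IsCyclic.card_pow_eq_one_le (orderOf_pos t)
  have hy : y ∈ (zpowers t : Set G).toFinset := by
    simpa [hroots] using orderOf_dvd_iff_pow_eq_one.1 h
  simpa using hy

lemma mem_zpowers_of_orderOf_dvd {g t y : G} (ht : t ∈ zpowers g) (hy : y ∈ zpowers g)
    (h : orderOf y ∣ orderOf t) : y ∈ zpowers t := by
  have hmem := IsCyclic.mem_zpowers_of_orderOf_dvd (t := (⟨t, ht⟩ : zpowers g)) (y := ⟨y, hy⟩)
    (by simpa only [orderOf_mk] using h)
  obtain ⟨k, hk⟩ := mem_zpowers_iff.1 hmem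
  exact mem_zpowers_iff.2 ⟨k, by simpa using congrArg Subtype.val hk⟩

lemma zpowers_le_zpowers_iff_orderOf_dvd {g t y : G} (ht : t ∈ zpowers g) (hy : y ∈ zpowers g) :
    zpowers y ≤ zpowers t ↔ orderOf y ∣ orderOf t :=
  ⟨fun h => orderOf_dvd_of_mem_zpowers (h (mem_zpowers y)),
    fun h => zpowers_le.2 (mem_zpowers_of_orderOf_dvd ht hy h)⟩

lemma ncard_orderOf_eq_totient {g : G} {d : ℕ} (hd : d ∣ orderOf g) :
    {y | y ∈ zpowers g ∧ orderOf y = d}.ncard = d.totient := by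
  classical
  have := Fintype.ofFinite G
  have himage : {y | y ∈ zpowers g ∧ orderOf y = d} =
      Subtype.val '' {z : zpowers g | orderOf z = d} := by
    ext y
    simp only [Set.mem_image, Set.mem_ofPred_eq, Subtype.exists, orderOf_mk, exists_and_right,
      exists_eq_right, exists_prop]
  rw [himage, Set.ncard_image_of_injective _ Subtype.val_injective, Set.ncard_eq_toFinset_card',
    Set.toFinset_ofPred]
  exact IsCyclic.card_orderOf_eq_totient (by rwa [Fintype.card_zpowers])

lemma totient_orderOf_le_ncard_twinClass (g : G) : (orderOf g).totient ≤ (twinClass g).ncard := by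
  rw [← ncard_orderOf_eq_totient dvd_rfl]
  refine Set.ncard_le_ncard (fun t ⟨ht, hto⟩ => closedPowerNbhd_congr ?_) (Set.toFinite _)
  exact le_antisymm (zpowers_le.2 ht)
    ((zpowers_le_zpowers_iff_orderOf_dvd ht (mem_zpowers g)).2 (hto ▸ dvd_rfl))

end Cyclic

section TwinClass

variable {G : Type*} [Group G] [Finite G]

lemma mem_closedPowerNbhd_iff_dvd_or_dvd {g t y : G} (ht : t ∈ zpowers g) (hy : y ∈ zpowers g) :
    y ∈ closedPowerNbhd t ↔ orderOf t ∣ orderOf y ∨ orderOf y ∣ orderOf t := by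
  rw [closedPowerNbhd, Set.mem_ofPred_eq, zpowers_le_zpowers_iff_orderOf_dvd hy ht,
    zpowers_le_zpowers_iff_orderOf_dvd ht hy]

lemma ncard_twinClass_le_totient {g x : G} (h : ∀ t ∈ twinClass x, zpowers t < zpowers g) :
    (twinClass x).ncard ≤ (orderOf g).totient := by
  classical
  have hmem : ∀ t ∈ twinClass x, t ∈ zpowers g := fun t ht => (h t ht).le (mem_zpowers t)
  set K := (Set.toFinite (twinClass x)).toFinset
  have hK : ∀ t ∈ K, t ∈ twinClass x := fun t ht => (Set.Finite.mem_toFinset _).1 ht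
  have hfiber : ∀ d ∈ K.image orderOf, (K.filter (orderOf · = d)).card ≤ d.totient := by
    intro d hd
    obtain ⟨t, ht, rfl⟩ := Finset.mem_image.1 hd
    rw [← ncard_orderOf_eq_totient (orderOf_dvd_of_mem_zpowers (hmem t (hK t ht))),
      ← Set.ncard_coe_finset]
    refine Set.ncard_le_ncard (fun y hy => ?_) (Set.toFinite _)
    rw [Finset.coe_filter] at hy
    exact ⟨hmem y (hK y hy.1), hy.2⟩
  have hproper : ∀ d ∈ K.image orderOf, d ∣ orderOf g ∧ d ≠ orderOf g := by
    intro d hd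
    obtain ⟨t, ht, rfl⟩ := Finset.mem_image.1 hd
    refine ⟨orderOf_dvd_of_mem_zpowers (hmem t (hK t ht)), fun heq => (h t (hK t ht)).not_ge ?_⟩
    exact (zpowers_le_zpowers_iff_orderOf_dvd (hmem t (hK t ht)) (mem_zpowers g)).2 (heq ▸ dvd_rfl)
  have hcomp : ∀ d ∈ K.image orderOf, ∀ d' ∈ K.image orderOf, ∀ e, e ∣ orderOf g →
      d ∣ e ∨ e ∣ d → d' ∣ e ∨ e ∣ d' := by
    intro d hd d' hd' e he
    obtain ⟨t, ht, rfl⟩ := Finset.mem_image.1 hd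
    obtain ⟨t', ht', rfl⟩ := Finset.mem_image.1 hd'
    have hy : g ^ (orderOf g / e) ∈ zpowers g := pow_mem (mem_zpowers g) _
    have hoy := orderOf_pow_orderOf_div (orderOf_pos g).ne' he
    rw [← hoy, ← mem_closedPowerNbhd_iff_dvd_or_dvd (hmem t (hK t ht)) hy,
      ← mem_closedPowerNbhd_iff_dvd_or_dvd (hmem t' (hK t' ht')) hy, hK t ht, hK t' ht']
    exact id
  calc (twinClass x).ncard = K.card := Set.ncard_eq_toFinset_card _ _
    _ = ∑ d ∈ K.image orderOf, (K.filter (orderOf · = d)).card :=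
        Finset.card_eq_sum_card_image _ _
    _ ≤ ∑ d ∈ K.image orderOf, d.totient := Finset.sum_le_sum hfiber
    _ ≤ (orderOf g).totient :=
        Nat.sum_totient_le_totient_of_forall_dvd_or_dvd (orderOf_pos g).ne' _ hproper hcomp

lemma Ncount_le_Ncount_of_forall_twinClass_lt {g x : G}
    (h : ∀ t ∈ twinClass x, zpowers t < zpowers g) : Ncount x ≤ Ncount g := by
  rw [Ncount_eq_ncard_twinClass, Ncount_eq_ncard_twinClass]
  exact (ncard_twinClass_le_totient h).trans (totient_orderOf_le_ncard_twinClass g)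

end TwinClass

section Adjacency

variable {G : Type*} [Group G] [Finite G]

lemma exists_maximal_zpowers_ge (d : G) :
    ∃ c, zpowers d ≤ zpowers c ∧ ∀ t, zpowers c ≤ zpowers t → zpowers t ≤ zpowers c := by
  obtain ⟨_, hle, ⟨c, rfl⟩, hmax⟩ :=
    Finite.exists_le_maximal (p := fun H : Subgroup G => ∃ c, zpowers c = H) ⟨d, rfl⟩
  exact ⟨c, hle, fun t hct => hmax ⟨t, rfl⟩ hct⟩

lemma exists_padj_padj_le_Ncount_of_eadj {a b : G} (hnadj : ¬ padj a b) (he : eadj a b) :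
    ∃ c, padj a c ∧ padj b c ∧ max (Ncount a) (Ncount b) ≤ Ncount c := by
  obtain ⟨hab, d, had, hbd⟩ := he
  obtain ⟨c, hdc, hmax⟩ := exists_maximal_zpowers_ge d
  have hbelow : ∀ x y : G, x ≠ y → ¬ padj x y → zpowers x ≤ zpowers c → zpowers y ≤ zpowers c →
      padj x c ∧ Ncount x ≤ Ncount c := by
    intro x y hxy hnxy hxc hyc
    have hne : closedPowerNbhd x ≠ closedPowerNbhd c := fun h =>
      hnxy ⟨hxy, (h ▸ Or.inr hyc : y ∈ closedPowerNbhd x)⟩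
    exact ⟨⟨fun h => hne (h ▸ rfl), Or.inl hxc⟩,
      Ncount_le_Ncount_of_forall_twinClass_lt (forall_twinClass_lt_of_maximal hmax hxc hne)⟩
  have hac := (zpowers_le.2 had).trans hdc
  have hbc := (zpowers_le.2 hbd).trans hdc
  obtain ⟨hac', hNa⟩ := hbelow a b hab hnadj hac hbc
  obtain ⟨hbc', hNb⟩ := hbelow b a hab.symm (mt padj_comm.2 hnadj) hbc hac
  exact ⟨c, hac', hbc', max_le hNa hNb⟩

lemma eadj_of_padj_of_padj {a b c : G} (hab : a ≠ b) (hnadj : ¬ padj a b)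
    (hN : Ncount a ≠ Ncount b) (hac : padj a c) (hbc : padj b c)
    (hc : max (Ncount a) (Ncount b) ≤ Ncount c) : eadj a b := by
  obtain ⟨-, hac | hca⟩ := hac <;> obtain ⟨-, hbc | hcb⟩ := hbc
  · exact ⟨hab, c, hac (mem_zpowers a), hbc (mem_zpowers b)⟩
  · exact absurd ⟨hab, Or.inl (hac.trans hcb)⟩ hnadj
  · exact absurd ⟨hab, Or.inr (hbc.trans hca)⟩ hnadj
  by_contra hne
  have hNa := Ncount_le_Ncount_of_forall_twinClass_lt
    (forall_twinClass_lt_of_not_eadj hab hnadj hne hca hcb)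
  have hNb := Ncount_le_Ncount_of_forall_twinClass_lt
    (forall_twinClass_lt_of_not_eadj hab.symm (mt padj_comm.2 hnadj) (mt eadj_comm.2 hne) hcb hca)
  omega

end Adjacency

theorem stmt15_general {G : Type*} [Group G] [Finite G]
    (a b : G) (hne : a ≠ b) (hnadj : ¬ padj a b) (hN : Ncount a ≠ Ncount b) :
    eadj a b ↔
      ∃ c : G, padj a c ∧ padj b c ∧ max (Ncount a) (Ncount b) ≤ Ncount c :=
  ⟨exists_padj_padj_le_Ncount_of_eadj hnadj,
    fun ⟨_, hac, hbc, hc⟩ => eadj_of_padj_of_padj hne hnadj hN hac hbc hc⟩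

theorem stmt15 {G : Type*} [Group G] [Finite G] (hnc : ¬ IsCyclic G)
    (a b : G) (hne : a ≠ b) (hnadj : ¬ padj a b) (hN : Ncount a ≠ Ncount b) :
    eadj a b ↔
      ∃ c : G, padj a c ∧ padj b c ∧ max (Ncount a) (Ncount b) ≤ Ncount c :=
  stmt15_general a b hne hnadj hN
end
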